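/- Let V be a vertex operator algebra with integral form V_ℤ, and let W^{(1)}, W^{(2)}, W^{(3)} be V-modules with integral forms W^{(1)}_ℤ, W^{(2)}_ℤ, W^{(3)}_ℤ compatible with V_ℤ. Suppose T^{(1)} and T^{(2)} generate W^{(1)}_ℤ and W^{(2)}_ℤ respectively as V_ℤ-modules. If an intertwining operator 𝒴 of type (W^{(3)}; W^{(1)}, W^{(2)}) satisfies 𝒴(t₁, x)t₂ ∈ W^{(3)}_ℤ{x} for all t₁ ∈ T^{(1)}, t₂ ∈ T^{(2)}, then 𝒴(w₁, x)w₂ ∈ W^{(3)}_ℤ{x} for all w₁ ∈ W^{(1)}_ℤ, w₂ ∈ W^{(2)}_ℤ. -/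
import Mathlib


open scoped BigOperators

private lemma finsum_mem_aux {M : Type} [AddCommGroup M] (S : Submodule ℤ M) (f : ℕ → M)
    (h : ∀ i, f i ∈ S) : (∑ᶠ i, f i) ∈ S := by
  by_cases hf : (Function.support f).Finite
  · rw [finsum_eq_sum f hf]
    exact Submodule.sum_mem S fun i _ => h i
  · rw [finsum_of_infinite_support hf]
    exact S.zero_mem

private lemma choose_int_zero_of_lt {N i : ℕ} (h : N < i) :
    Ring.choose ((N : ℤ)) i = 0 := by
  rw [Ring.choose_natCast]
  norm_num [Nat.choose_eq_zero_of_lt h]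


/-- Theorem `intwopgen`: an intertwining operator is integral if it is
integral on generators. Component formulation: `Y_V` is the vertex operator of `V`,
`Y₁, Y₂, Y₃` the module vertex operators, `I` the intertwining operator, `vac` the vacuum.
`VZ` is an integral form of `V` (a `ℤ`-lattice vertex subring), `WiZ` integral forms of the
modules (`ℤ`-lattices stable under `VZ`), and `Ti ⊆ WiZ` generate `WiZ` as `VZ`-modules
(i.e. `WiZ` is the smallest vertex-operator-stable `ℤ`-submodule containing `Ti`).
If `I t t₁ t₂ ∈ W₃Z` for all generators, then `I t w₁ w₂ ∈ W₃Z` for all `w₁ ∈ W₁Z`,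
`w₂ ∈ W₂Z`. -/
theorem integral_intertwining_of_integral_on_generators
    (V W₁ W₂ W₃ : Type)
    [AddCommGroup V] [Module ℂ V] [AddCommGroup W₁] [Module ℂ W₁]
    [AddCommGroup W₂] [Module ℂ W₂] [AddCommGroup W₃] [Module ℂ W₃]
    (YV : ℤ → V →ₗ[ℂ] V →ₗ[ℂ] V)
    (Y₁ : ℤ → V →ₗ[ℂ] W₁ →ₗ[ℂ] W₁)
    (Y₂ : ℤ → V →ₗ[ℂ] W₂ →ₗ[ℂ] W₂)
    (Y₃ : ℤ → V →ₗ[ℂ] W₃ →ₗ[ℂ] W₃)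
    (I : ℂ → W₁ →ₗ[ℂ] W₂ →ₗ[ℂ] W₃)
    (vac : V)
    (hlt1 : ∀ (v : V) (w : W₁), ∃ N : ℕ, ∀ n : ℤ, (N : ℤ) ≤ n → Y₁ n v w = 0)
    (hlt2 : ∀ (v : V) (w : W₂), ∃ N : ℕ, ∀ n : ℤ, (N : ℤ) ≤ n → Y₂ n v w = 0)
    (hltI : ∀ (w₁ : W₁) (w₂ : W₂) (q : ℂ), ∃ N : ℕ, ∀ i : ℕ, N ≤ i → I (q + i) w₁ w₂ = 0)
    (hJac : ∀ (v : V) (w₁ : W₁) (w₂ : W₂) (l m : ℤ) (q : ℂ),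
      (∑ᶠ i : ℕ, ((-1 : ℤ) ^ i * Ring.choose l i) • (Y₃ (m + l - i) v (I (q + i) w₁ w₂)))
        - (((-1 : ℤˣ) ^ l : ℤˣ) : ℤ) •
            (∑ᶠ i : ℕ, ((-1 : ℤ) ^ i * Ring.choose l i) •
              (I (q + l - i) w₁ (Y₂ (m + i) v w₂)))
      = ∑ᶠ i : ℕ, (Ring.choose m i) • (I (q + m - i) (Y₁ (l + i) v w₁) w₂))
    (VZ : Submodule ℤ V) (W₁Z : Submodule ℤ W₁) (W₂Z : Submodule ℤ W₂)
    (W₃Z : Submodule ℤ W₃)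
    (hvac : vac ∈ VZ)
    (hVZ : ∀ (n : ℤ), ∀ u ∈ VZ, ∀ v ∈ VZ, YV n u v ∈ VZ)
    (hW₁Z : ∀ (n : ℤ), ∀ v ∈ VZ, ∀ w ∈ W₁Z, Y₁ n v w ∈ W₁Z)
    (hW₂Z : ∀ (n : ℤ), ∀ v ∈ VZ, ∀ w ∈ W₂Z, Y₂ n v w ∈ W₂Z)
    (hW₃Z : ∀ (n : ℤ), ∀ v ∈ VZ, ∀ w ∈ W₃Z, Y₃ n v w ∈ W₃Z)
    (T₁ : Set W₁) (T₂ : Set W₂)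
    (hT₁sub : T₁ ⊆ W₁Z) (hT₂sub : T₂ ⊆ W₂Z)
    (hT₁gen : ∀ U : Submodule ℤ W₁,
      (∀ (n : ℤ), ∀ v ∈ VZ, ∀ w ∈ U, Y₁ n v w ∈ U) → T₁ ⊆ U → W₁Z ≤ U)
    (hT₂gen : ∀ U : Submodule ℤ W₂,
      (∀ (n : ℤ), ∀ v ∈ VZ, ∀ w ∈ U, Y₂ n v w ∈ U) → T₂ ⊆ U → W₂Z ≤ U)
    (hgen : ∀ t₁ ∈ T₁, ∀ t₂ ∈ T₂, ∀ t : ℂ, I t t₁ t₂ ∈ W₃Z) :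
    ∀ w₁ ∈ W₁Z, ∀ w₂ ∈ W₂Z, ∀ t : ℂ, I t w₁ w₂ ∈ W₃Z := by
  have heps : ∀ (l : ℤ) (x : W₃),
      (((-1 : ℤˣ) ^ l : ℤˣ) : ℤ) • ((((-1 : ℤˣ) ^ l : ℤˣ) : ℤ) • x) = x := by
    intro l x
    rw [smul_smul, ← Units.val_mul, ← sq, Int.units_sq, Units.val_one, one_smul]
  -- Stage 1 : generators in the first slot, arbitrary integral vectors in the second slot
  have stage1 : ∀ t₁ ∈ T₁, ∀ w₂ ∈ W₂Z, ∀ q : ℂ, I q t₁ w₂ ∈ W₃Z := by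
    intro t₁ ht₁
    let U₂ : Submodule ℤ W₂ :=
      { carrier := {w | w ∈ W₂Z ∧ ∀ q : ℂ, I q t₁ w ∈ W₃Z}
        add_mem' := fun ha hb =>
          ⟨W₂Z.add_mem ha.1 hb.1, fun q => by
            rw [map_add]; exact W₃Z.add_mem (ha.2 q) (hb.2 q)⟩
        zero_mem' := ⟨W₂Z.zero_mem, fun q => by rw [map_zero]; exact W₃Z.zero_mem⟩
        smul_mem' := fun n w hw =>
          ⟨W₂Z.smul_mem n hw.1, fun q => by
            rw [map_zsmul]; exact W₃Z.smul_mem n (hw.2 q)⟩ }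
    have hstab : ∀ (n : ℤ), ∀ v ∈ VZ, ∀ w ∈ U₂, Y₂ n v w ∈ U₂ := by
      intro m v hv w hw
      obtain ⟨hwZ, hwI⟩ : w ∈ W₂Z ∧ ∀ q : ℂ, I q t₁ w ∈ W₃Z := hw
      refine ⟨hW₂Z m v hv w hwZ, ?_⟩
      obtain ⟨N₁, hN₁⟩ := hlt1 v t₁
      obtain ⟨N₂, hN₂⟩ := hlt2 v w
      have key : ∀ d : ℕ, ∀ m' : ℤ, (N₂ : ℤ) ≤ m' + d → ∀ q : ℂ,
          I q t₁ (Y₂ m' v w) ∈ W₃Z := by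
        intro d
        induction d with
        | zero =>
          intro m' hm' q
          rw [hN₂ m' (by simpa using hm')]
          simp
        | succ d ih =>
          intro m' hm' q
          have hJ := hJac v t₁ w (N₁ : ℤ) m' (q - ((N₁ : ℤ) : ℂ))
          rw [finsum_eq_zero_of_forall_eq_zero (f := fun i : ℕ =>
              (Ring.choose m' i) •
                (I (q - ((N₁ : ℤ) : ℂ) + m' - i) (Y₁ ((N₁ : ℤ) + i) v t₁) w))
            (fun i => by
              simp [hN₁ ((N₁ : ℤ) + i) (by omega)])] at hJ
          have hB : (∑ᶠ i : ℕ, ((-1 : ℤ) ^ i * Ring.choose ((N₁ : ℤ)) i) •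
              (I (q - ((N₁ : ℤ) : ℂ) + (N₁ : ℤ) - i) t₁ (Y₂ (m' + i) v w))) ∈ W₃Z := by
            have hA : (∑ᶠ i : ℕ, ((-1 : ℤ) ^ i * Ring.choose ((N₁ : ℤ)) i) •
                (Y₃ (m' + (N₁ : ℤ) - i) v (I (q - ((N₁ : ℤ) : ℂ) + i) t₁ w))) ∈ W₃Z :=
              finsum_mem_aux W₃Z _ fun i =>
                W₃Z.smul_mem _ (hW₃Z _ v hv _ (hwI _))
            have h1 := sub_eq_zero.mp hJ
            have h2 : (∑ᶠ i : ℕ, ((-1 : ℤ) ^ i * Ring.choose ((N₁ : ℤ)) i) •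
                (I (q - ((N₁ : ℤ) : ℂ) + (N₁ : ℤ) - i) t₁ (Y₂ (m' + i) v w)))
                = (((-1 : ℤˣ) ^ (N₁ : ℤ) : ℤˣ) : ℤ) •
                  (∑ᶠ i : ℕ, ((-1 : ℤ) ^ i * Ring.choose ((N₁ : ℤ)) i) •
                    (Y₃ (m' + (N₁ : ℤ) - i) v (I (q - ((N₁ : ℤ) : ℂ) + i) t₁ w))) := by
              rw [h1, heps]
            rw [h2]
            exact W₃Z.smul_mem _ hA
          set f : ℕ → W₃ := fun i => ((-1 : ℤ) ^ i * Ring.choose ((N₁ : ℤ)) i) •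
              (I (q - ((N₁ : ℤ) : ℂ) + (N₁ : ℤ) - i) t₁ (Y₂ (m' + i) v w)) with hf
          have hsupp : Function.support f ⊆ ↑(Finset.range (N₁ + 1)) := by
            intro i hi
            simp only [Finset.coe_range, Set.mem_Iio]
            by_contra h
            push_neg at h
            exact hi (by simp [hf, choose_int_zero_of_lt (show N₁ < i by omega)])
          have hsum : (∑ᶠ i, f i) = ∑ i ∈ Finset.range (N₁ + 1), f i :=
            finsum_eq_sum_of_support_subset f hsupp
          have hBmem : ((∑ i ∈ Finset.range N₁, f (i + 1)) + f 0) ∈ W₃Z := by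
            rw [← Finset.sum_range_succ', ← hsum]
            exact hB
          have htail : (∑ i ∈ Finset.range N₁, f (i + 1)) ∈ W₃Z :=
            Submodule.sum_mem _ fun i _ =>
              W₃Z.smul_mem _ (ih (m' + (i + 1)) (by push_cast; push_cast at hm'; omega) _)
          have h0 : f 0 ∈ W₃Z := by
            have := W₃Z.sub_mem hBmem htail
            simpa using this
          have hf0 : f 0 = I q t₁ (Y₂ m' v w) := by
            simp [hf, Ring.choose_zero_right]
          rwa [hf0] at h0
      intro q
      exact key ((N₂ : ℤ) - m).toNat m (by omega) q
    have hle := hT₂gen U₂ hstab (fun t₂ ht₂ => ⟨hT₂sub ht₂, fun q => hgen t₁ ht₁ t₂ ht₂ q⟩)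
    intro w₂ hw₂ q
    exact (hle hw₂).2 q
  -- Stage 2 : arbitrary integral vectors in the first slot
  let U₁ : Submodule ℤ W₁ :=
    { carrier := {w | w ∈ W₁Z ∧ ∀ w₂ ∈ W₂Z, ∀ q : ℂ, I q w w₂ ∈ W₃Z}
      add_mem' := fun ha hb =>
        ⟨W₁Z.add_mem ha.1 hb.1, fun w₂ hw₂ q => by
          rw [map_add, LinearMap.add_apply]
          exact W₃Z.add_mem (ha.2 w₂ hw₂ q) (hb.2 w₂ hw₂ q)⟩
      zero_mem' := ⟨W₁Z.zero_mem, fun w₂ hw₂ q => by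
        rw [map_zero, LinearMap.zero_apply]; exact W₃Z.zero_mem⟩
      smul_mem' := fun n w hw =>
        ⟨W₁Z.smul_mem n hw.1, fun w₂ hw₂ q => by
          rw [map_zsmul, LinearMap.smul_apply]
          exact W₃Z.smul_mem n (hw.2 w₂ hw₂ q)⟩ }
  have hstab₁ : ∀ (n : ℤ), ∀ v ∈ VZ, ∀ w ∈ U₁, Y₁ n v w ∈ U₁ := by
    intro n v hv w hw
    obtain ⟨hwZ, hwI⟩ : w ∈ W₁Z ∧ ∀ w₂ ∈ W₂Z, ∀ q : ℂ, I q w w₂ ∈ W₃Z := hw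
    refine ⟨hW₁Z n v hv w hwZ, ?_⟩
    intro w₂ hw₂ q
    have hJ := hJac v w w₂ n 0 q
    have hrhs : (∑ᶠ i : ℕ, (Ring.choose (0 : ℤ) i) •
        (I (q + (0 : ℤ) - i) (Y₁ (n + i) v w) w₂)) = I q (Y₁ n v w) w₂ := by
      rw [finsum_eq_single _ 0 (fun i hi => by
        have hc : Ring.choose (0 : ℤ) i = 0 := by
          have : Ring.choose (((0 : ℕ) : ℤ)) i = 0 :=
            choose_int_zero_of_lt (Nat.pos_of_ne_zero hi)
          simpa using this
        simp [hc])]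
      simp [Ring.choose_zero_right]
    rw [← hrhs, ← hJ]
    refine W₃Z.sub_mem ?_ (W₃Z.smul_mem _ ?_)
    · exact finsum_mem_aux W₃Z _ fun i =>
        W₃Z.smul_mem _ (hW₃Z _ v hv _ (hwI w₂ hw₂ _))
    · exact finsum_mem_aux W₃Z _ fun i =>
        W₃Z.smul_mem _ (hwI _ (hW₂Z _ v hv w₂ hw₂) _)
  have hle₁ := hT₁gen U₁ hstab₁ (fun t₁ ht₁ =>
    ⟨hT₁sub ht₁, fun w₂ hw₂ q => stage1 t₁ ht₁ w₂ hw₂ q⟩)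
  intro w₁ hw₁ w₂ hw₂ t
  exact (hle₁ hw₁).2 w₂ hw₂ t
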